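/- Let t>0, k ∈ ℤ with k ≠ 0, and let z ∈ ℂ satisfy Re(z²) ≥ 0 and |Re z| ≤ π. Then the derivative of the Mehler kernel in its second spatial variable satisfies |∂_yK(t, z, 2kπ)| ≤ (coth(2t)·2|k|π + |z|/sinh(2t)) · (2π sinh(2t))^{−1/2} · exp((−2k²π² + 2|k|π²)/sinh(2t)). -/

import Mathlib

/-- The Mehler kernel, extended to a complex spatial variable. -/
noncomputable def mehlerK (t : ℝ) (z y : ℂ) : ℂ :=
  (((Real.sqrt (2 * Real.pi * Real.sinh (2 * t)))⁻¹ : ℝ) : ℂ) *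
    Complex.exp (-(((Real.cosh (2 * t) / Real.sinh (2 * t)) : ℝ) : ℂ) * (z ^ 2 + y ^ 2) / 2
      + z * y / ((Real.sinh (2 * t) : ℝ) : ℂ))

/-- Derivative of the Mehler kernel in its second spatial variable. -/
noncomputable def dyK (t : ℝ) (z y : ℂ) : ℂ :=
  (-(((Real.cosh (2 * t) / Real.sinh (2 * t)) : ℝ) : ℂ) * y
      + z / ((Real.sinh (2 * t) : ℝ) : ℂ)) * mehlerK t z y

theorem stmt19 (t : ℝ) (ht : 0 < t) (k : ℤ) (hk : k ≠ 0)
    (z : ℂ) (hz1 : 0 ≤ (z ^ 2).re) (hz2 : |z.re| ≤ Real.pi) :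
    ‖dyK t z (2 * (k : ℂ) * (Real.pi : ℂ))‖ ≤
      ((Real.cosh (2 * t) / Real.sinh (2 * t)) * (2 * |(k : ℝ)| * Real.pi)
          + ‖z‖ / Real.sinh (2 * t)) *
        (Real.sqrt (2 * Real.pi * Real.sinh (2 * t)))⁻¹ *
        Real.exp ((-2 * (k : ℝ) ^ 2 * Real.pi ^ 2 + 2 * |(k : ℝ)| * Real.pi ^ 2) /
          Real.sinh (2 * t)) := by
  have hpi := Real.pi_pos
  set s := Real.sinh (2*t) with hs
  set c := Real.cosh (2*t) with hc
  have hs0 : 0 < s := Real.sinh_pos_iff.mpr (by linarith)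
  have hc1 : 1 ≤ c := Real.one_le_cosh _
  set r : ℝ := 2 * (k:ℝ) * Real.pi with hr
  have hcast : (2 * (k:ℂ) * (Real.pi:ℂ)) = (r:ℂ) := by rw [hr]; push_cast; ring
  have habsr : |r| = 2 * |(k:ℝ)| * Real.pi := by
    rw [hr, abs_mul, abs_mul, abs_of_pos hpi, abs_two]
  have hw : ((-(((c / s) : ℝ) : ℂ) * (z ^ 2 + (r:ℂ) ^ 2) / 2
      + z * (r:ℂ) / ((s : ℝ) : ℂ))).re
      = (-c * ((z^2).re + r^2)/2 + z.re * r) / s := by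
    simp [Complex.div_re, Complex.add_re, Complex.mul_re, Complex.normSq_ofReal,
      ← Complex.ofReal_pow]
    field_simp
  set B := (Real.sqrt (2 * Real.pi * s))⁻¹ with hB
  have hB0 : 0 ≤ B := by positivity
  have hzr : z.re * r ≤ Real.pi * (2 * |(k:ℝ)| * Real.pi) := by
    calc z.re * r ≤ |z.re * r| := le_abs_self _
    _ = |z.re| * |r| := abs_mul _ _
    _ ≤ Real.pi * (2 * |(k:ℝ)| * Real.pi) := by rw [habsr]; gcongr
  have hre : (-c * ((z^2).re + r^2)/2 + z.re * r) / s
      ≤ (-2 * (k:ℝ)^2 * Real.pi^2 + 2 * |(k:ℝ)| * Real.pi^2) / s := by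
    have hr2 : r^2 = 4*(k:ℝ)^2*Real.pi^2 := by rw [hr]; ring
    gcongr (?_ + ?_) / s
    · nlinarith
    · nlinarith
  have hF : ‖-(((c / s : ℝ)) : ℂ) * (r:ℂ) + z / ((s:ℝ):ℂ)‖
      ≤ c / s * (2 * |(k:ℝ)| * Real.pi) + ‖z‖ / s := by
    calc ‖-(((c / s : ℝ)) : ℂ) * (r:ℂ) + z / ((s:ℝ):ℂ)‖
        ≤ ‖-(((c / s : ℝ)) : ℂ) * (r:ℂ)‖ + ‖z / ((s:ℝ):ℂ)‖ :=
          norm_add_le _ _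
      _ = |c/s| * |r| + ‖z‖ / |s| := by
          simp [norm_mul, norm_div, Complex.norm_real, abs_div]
      _ = c / s * (2 * |(k:ℝ)| * Real.pi) + ‖z‖ / s := by
          rw [habsr, abs_of_pos hs0, abs_of_nonneg (by positivity : (0:ℝ) ≤ c/s)]
  calc ‖dyK t z (2 * (k : ℂ) * (Real.pi : ℂ))‖
      = ‖-(((c / s : ℝ)) : ℂ) * (r:ℂ) + z / ((s:ℝ):ℂ)‖ *
        (B * Real.exp ((-c * ((z^2).re + r^2)/2 + z.re * r) / s)) := by
        rw [dyK, mehlerK, hcast, norm_mul, norm_mul, Complex.norm_real, Real.norm_eq_abs, Complex.norm_exp,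
          abs_of_nonneg hB0, hw]
    _ ≤ (c / s * (2 * |(k:ℝ)| * Real.pi) + ‖z‖ / s) *
        (B * Real.exp ((-2 * (k:ℝ)^2 * Real.pi^2 + 2 * |(k:ℝ)| * Real.pi^2) / s)) := by
        gcongr
    _ = (c / s * (2 * |(k:ℝ)| * Real.pi) + ‖z‖ / s) * B *
        Real.exp ((-2 * (k:ℝ)^2 * Real.pi^2 + 2 * |(k:ℝ)| * Real.pi^2) / s) := by ring
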